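/- Let n be even. Then the sum of absolute values of the middle column of the Krawtchouk matrix satisfies Σ_{i=0}^{n} |K_i(n/2, n)| = 2^{n/2}. -/

import Mathlib

open Finset Polynomial

def K (i k n : ℕ) : ℤ :=
  ∑ j ∈ Finset.range (i + 1), (-1) ^ j * (Nat.choose k j) * (Nat.choose (n - k) (i - j))

/-! `K i k n` is the coefficient of `X^i` in `(1 - X)^k (1 + X)^(n - k)`. In the middle column
`n = 2m`, `k = m` this generating function is `(1 - X^2)^m`, so the column is
`1, 0, -C(m,1), 0, C(m,2), …`, and its absolute values sum to `∑ C(m,t) = 2^m`. -/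

theorem coeff_one_sub_X_pow {R : Type*} [CommRing R] (k j : ℕ) :
    ((1 - X : R[X]) ^ k).coeff j = (-1) ^ j * k.choose j := by
  have : (1 - X : R[X]) ^ k = C ((-1) ^ k) * (X + C (-1)) ^ k := by
    rw [map_pow, ← mul_pow, C_neg, C_1]
    ring
  rw [this, coeff_C_mul, coeff_X_add_C_pow, ← mul_assoc, ← pow_add]
  rcases le_or_gt j k with h | h
  · rw [show k + (k - j) = j + 2 * (k - j) by omega, pow_add, pow_mul, neg_one_sq, one_pow,
      mul_one]
  · simp [Nat.choose_eq_zero_of_lt h]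

theorem K_eq_coeff (i k n : ℕ) :
    K i k n = ((1 - X : ℤ[X]) ^ k * (1 + X) ^ (n - k)).coeff i := by
  rw [coeff_mul, Nat.sum_antidiagonal_eq_sum_range_succ_mk, K]
  simp only [coeff_one_sub_X_pow, coeff_one_add_X_pow]

theorem one_sub_X_pow_mul_one_add_X_pow {R : Type*} [CommRing R] (m : ℕ) :
    (1 - X : R[X]) ^ m * (1 + X) ^ m = expand R 2 ((1 - X) ^ m) := by
  rw [← mul_pow, map_pow, map_sub, map_one, expand_X]
  ring

theorem K_middle_column (i m : ℕ) :
    K i m (2 * m) = if 2 ∣ i then (-1 : ℤ) ^ (i / 2) * m.choose (i / 2) else 0 := by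
  rw [K_eq_coeff, two_mul, Nat.add_sub_cancel, one_sub_X_pow_mul_one_add_X_pow,
    coeff_expand two_pos, coeff_one_sub_X_pow]

theorem sum_range_two_mul_add_one_ite_dvd {M : Type*} [AddCommMonoid M] (f : ℕ → M) (m : ℕ) :
    ∑ i ∈ range (2 * m + 1), (if 2 ∣ i then f (i / 2) else 0) = ∑ t ∈ range (m + 1), f t := by
  induction m with
  | zero => simp
  | succ m ih =>
    rw [show 2 * (m + 1) + 1 = 2 * m + 1 + 1 + 1 by ring, sum_range_succ, sum_range_succ, ih,
      sum_range_succ _ (m + 1), if_neg (by omega), if_pos (by omega),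
      show (2 * m + 1 + 1) / 2 = m + 1 by omega, add_zero]

theorem abs_K_middle_column (i m : ℕ) :
    |K i m (2 * m)| = if 2 ∣ i then (m.choose (i / 2) : ℤ) else 0 := by
  rw [K_middle_column, apply_ite abs, abs_zero, abs_mul, abs_pow, abs_neg, abs_one, one_pow,
    one_mul, Nat.abs_cast]

theorem stmt8_general (n : ℕ) (hn : Even n) :
    ∑ i ∈ Finset.range (n + 1), |K i (n / 2) n| = 2 ^ (n / 2) := by
  obtain ⟨m, rfl⟩ := hn
  rw [← two_mul, Nat.mul_div_cancel_left m two_pos]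
  simp_rw [abs_K_middle_column]
  rw [sum_range_two_mul_add_one_ite_dvd (fun t => (m.choose t : ℤ)), ← Nat.cast_sum,
    Nat.sum_range_choose, Nat.cast_pow, Nat.cast_ofNat]

theorem stmt8 (n : ℕ) (hn : Even n) (hpos : 0 < n) :
    ∑ i ∈ Finset.range (n + 1), |K i (n / 2) n| = 2 ^ (n / 2) :=
  stmt8_general n hn
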